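/- Let w₀ be an admissible multidegree on (Γ, 𝐧), for each v ∈ V(Γ) let w_v ∈ V(G(w₀)) be concentrated at v, and let w ∈ V(G(w₀)). Then the function D_{w,v}, defined from any path P(w, v₁, …, v_m) in G(w₀) from w to w_v, is independent of the choice of path from w to w_v. -/

import Mathlib

open scoped Classical

namespace LLS

variable {V E : Type*}

/-- `σ(e,v)`: `1` if `v` is the tail of `e`, `-1` if `v` is the head of `e`, `0` otherwise. -/
noncomputable def sigma (tail head : E → V) (e : E) (v : V) : ℤ :=
  if tail e = v then 1 else if head e = v then -1 else 0

/-- The endpoint of `e` other than `v` (for `e` adjacent to `v`). -/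
noncomputable def otherEnd (tail head : E → V) (e : E) (v : V) : V :=
  if tail e = v then head e else tail e

/-- The multigraph is loopless. -/
def Loopless (tail head : E → V) : Prop := ∀ e, tail e ≠ head e

/-- The multigraph is connected. -/
def MGConnected (tail head : E → V) : Prop :=
  ∀ u v : V, Relation.ReflTransGen
    (fun a b => ∃ e, (tail e = a ∧ head e = b) ∨ (tail e = b ∧ head e = a)) u v

/-- An admissible multidegree on `(Γ, 𝐧)`: a function `V(Γ) → ℤ` together with an
element `μ(e) ∈ ℤ/𝐧(e)ℤ` for each edge `e`. -/
structure AdmMD (V E : Type*) (n : E → ℕ) where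
  wV : V → ℤ
  mu : ∀ e : E, ZMod (n e)

section FinGraph

variable [Fintype V] [Fintype E] [DecidableEq V] [DecidableEq E]

/-- The twist of an admissible multidegree at a vertex `v`. -/
noncomputable def twist (tail head : E → V) (n : E → ℕ) (w : AdmMD V E n) (v : V) :
    AdmMD V E n where
  wV u := w.wV u
    - (if u = v then ((Finset.univ.filter fun e : E =>
        sigma tail head e v ≠ 0 ∧ w.mu e = 0).card : ℤ) else 0)
    + ((Finset.univ.filter fun e : E => sigma tail head e v ≠ 0 ∧
        w.mu e + (sigma tail head e v : ZMod (n e)) = 0 ∧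
        otherEnd tail head e v = u).card : ℤ)
  mu e := w.mu e + (sigma tail head e v : ZMod (n e))

/-- The negative twist of an admissible multidegree at a vertex `v`
(the inverse of `twist`). -/
noncomputable def negTwist (tail head : E → V) (n : E → ℕ) (w : AdmMD V E n) (v : V) :
    AdmMD V E n where
  wV u := w.wV u
    + (if u = v then ((Finset.univ.filter fun e : E => sigma tail head e v ≠ 0 ∧
        w.mu e - (sigma tail head e v : ZMod (n e)) = 0).card : ℤ) else 0)
    - ((Finset.univ.filter fun e : E => sigma tail head e v ≠ 0 ∧
        w.mu e = 0 ∧ otherEnd tail head e v = u).card : ℤ)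
  mu e := w.mu e - (sigma tail head e v : ZMod (n e))

/-- An admissible multidegree is concentrated at `v` if there is an ordering of all
vertices starting with `v` such that composing the negative twists at all previous
vertices makes the multidegree negative at each subsequent vertex. -/
def Concentrated (tail head : E → V) (n : E → ℕ) (w : AdmMD V E n) (v : V) : Prop :=
  ∃ l : List V, l.Nodup ∧ (∀ x : V, x ∈ l) ∧ l.head? = some v ∧
    ∀ (i : ℕ) (h : i < l.length), 0 < i →
      (((l.take i).foldl (negTwist tail head n) w).wV (l.get ⟨i, h⟩)) < 0

/-- `w` is obtained from `w₀` by a finite sequence of twists, i.e. `w ∈ V(G(w₀))`. -/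
def TwistSeq (tail head : E → V) (n : E → ℕ) (w₀ w : AdmMD V E n) : Prop :=
  ∃ l : List V, l.foldl (twist tail head n) w₀ = w

/-- `l` records the successive twist vertices of a minimal path from `w` to `w'`
in `G(w₀)`. -/
def IsMinPath (tail head : E → V) (n : E → ℕ) (w w' : AdmMD V E n) (l : List V) : Prop :=
  l.foldl (twist tail head n) w = w' ∧
    ∀ l' : List V, l'.foldl (twist tail head n) w = w' → l.length ≤ l'.length

/-- The membership condition describing the subgraph `Ḡ(w₀)` of `G(w₀)`:
no minimal path from `w` to `w_v` involves twisting at `v`. -/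
def InBarG (tail head : E → V) (n : E → ℕ) (w₀ : AdmMD V E n) (wv : V → AdmMD V E n)
    (w : AdmMD V E n) : Prop :=
  TwistSeq tail head n w₀ w ∧
    ∀ (v : V) (l : List V), IsMinPath tail head n w (wv v) l → v ∉ l

/-- Edges joining `v` and `u`. -/
noncomputable def edgesBetween (tail head : E → V) (v u : V) : Finset E :=
  Finset.univ.filter fun e => (tail e = v ∧ head e = u) ∨ (head e = v ∧ tail e = u)

/-- Edges adjacent to `v`. -/
noncomputable def edgesAdj (tail head : E → V) (v : V) : Finset E :=
  Finset.univ.filter fun e => tail e = v ∨ head e = v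

/-- The change of a divisor effected by a single chip-firing move at `v`. -/
noncomputable def fireDelta (tail head : E → V) (v : V) : V → ℤ := fun u =>
  ((edgesBetween tail head v u).card : ℤ)
    - (if u = v then ((edgesAdj tail head v).card : ℤ) else 0)

/-- A chip-firing move (twist) at `v`. -/
noncomputable def chipFire (tail head : E → V) (D : V → ℤ) (v : V) : V → ℤ :=
  fun u => D u + fireDelta tail head v u

/-- The inverse of a chip-firing move at `v`. -/
noncomputable def negChipFire (tail head : E → V) (D : V → ℤ) (v : V) : V → ℤ :=
  fun u => D u - fireDelta tail head v u

/-- A divisor (multidegree) on a graph is concentrated at `v`. -/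
def ConcentratedDiv (tail head : E → V) (D : V → ℤ) (v : V) : Prop :=
  ∃ l : List V, l.Nodup ∧ (∀ x : V, x ∈ l) ∧ l.head? = some v ∧
    ∀ (i : ℕ) (h : i < l.length), 0 < i →
      (((l.take i).foldl (negChipFire tail head) D) (l.get ⟨i, h⟩)) < 0

/-- A divisor on a graph is `v₀`-reduced. -/
def VReduced (tail head : E → V) (D : V → ℤ) (v₀ : V) : Prop :=
  (∀ u, u ≠ v₀ → 0 ≤ D u) ∧
    ∀ S : Finset V, S.Nonempty → v₀ ∉ S →
      ∃ v ∈ S, D v < ((Finset.univ.filter fun e : E =>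
        (tail e = v ∧ head e ∉ S) ∨ (head e = v ∧ tail e ∉ S)).card : ℤ)

/-- The function `D_{w,v}` on edges of `Γ` determined by a path `l` from `w` to `w_v`. -/
noncomputable def DFun (tail head : E → V) (n : E → ℕ) (w : AdmMD V E n) (l : List V)
    (v : V) (et : E) : ℤ :=
  (((Finset.univ : Finset (Fin l.length)).filter fun j =>
      l.get j = otherEnd tail head et v ∧
        ((l.take (j.val + 1)).foldl (twist tail head n) w).mu et = 0).card : ℤ)
  - (((Finset.univ : Finset (Fin l.length)).filter fun j =>
      l.get j = v ∧ ((l.take j.val).foldl (twist tail head n) w).mu et = 0).card : ℤ)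

end FinGraph

/-- The tail map of the subdivided graph `Γ̃`: the edge `e` of `Γ` is subdivided into
`𝐧(e)` edges `(e, j)`, `j = 0, …, 𝐧(e) - 1`, numbered from the tail of `e`; the new
vertices over `e` are `(e, i)`, `i = 0, …, 𝐧(e) - 2`, with `(e, i)` being the
`(i+1)`-st new vertex from the tail of `e`. -/
def tailT (tail head : E → V) (n : E → ℕ) :
    (Σ e : E, Fin (n e)) → V ⊕ Σ e : E, Fin (n e - 1) := fun p =>
  if h : p.2.val = 0 then Sum.inl (tail p.1)
  else Sum.inr ⟨p.1, ⟨p.2.val - 1, by have := p.2.isLt; omega⟩⟩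

/-- The head map of the subdivided graph `Γ̃`. -/
def headT (tail head : E → V) (n : E → ℕ) :
    (Σ e : E, Fin (n e)) → V ⊕ Σ e : E, Fin (n e - 1) := fun p =>
  if h : p.2.val = n p.1 - 1 then Sum.inl (head p.1)
  else Sum.inr ⟨p.1, ⟨p.2.val, by have := p.2.isLt; omega⟩⟩

/-- The multidegree on the subdivided graph `Γ̃` induced by an admissible multidegree:
it agrees with `w` on old vertices, is `1` on the `μ(e)`-th new vertex over `e`
when `μ(e) ≠ 0`, and is `0` on all other new vertices. -/
noncomputable def inducedMD (n : E → ℕ) (w : AdmMD V E n) :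
    (V ⊕ Σ e : E, Fin (n e - 1)) → ℤ
  | Sum.inl v => w.wV v
  | Sum.inr ⟨e, i⟩ => if (w.mu e).val = i.val + 1 then 1 else 0

/-- The simple graph `Γ̄` associated to the multigraph `Γ`: same vertices, one edge
between each pair of adjacent vertices. -/
def barGraph (tail head : E → V) : SimpleGraph V where
  Adj u v := u ≠ v ∧ ∃ e, (tail e = u ∧ head e = v) ∨ (tail e = v ∧ head e = u)
  symm := by
    constructor
    intro u v h
    exact ⟨h.1.symm, h.2.imp fun e he => he.symm⟩
  loopless := ⟨fun u h => h.1 rfl⟩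

/-!
Twists at `v` and at the other end `u` of an edge `e` move `μ(e)` by one step around `ℤ/n(e)`
in opposite directions, and `D_{w,v}(e)` counts, with signs, the steps at which `μ(e)` leaves or
reaches `0`. Reading `μ(e)` as an integer in `[0, n(e))` from the side of `v`, its total change
along a path is `c(v) - c(u) + n(e) D_{w,v}(e)`, where `c(x)` is the number of twists at `x`;
so it suffices that `c(tail e) - c(head e)` depends only on the endpoints of the path. For this
pair a multidegree with a function `a` on `V(Γ)`, extended affinely along the subdivided edges:
a twist at `x` changes the pairing by `-(L a)(x)` for the Laplacian `L` with edge weights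
`1 / n(e)`. Two paths with the same endpoints thus give the same value of
`∑ₑ (c(tail e) - c(head e)) (a(tail e) - a(head e)) / n(e)` for every `a`, and `a = c₁ - c₂`
makes the difference an energy `∑ₑ (a(tail e) - a(head e))² / n(e) = 0`.
-/

end LLS

namespace ZMod

lemma val_neg_one_add_one {m : ℕ} [NeZero m] : (-1 : ZMod m).val + 1 = m := by
  obtain ⟨k, rfl⟩ := Nat.exists_eq_succ_of_ne_zero (NeZero.ne m)
  rw [val_neg_one]

lemma val_sub_one_add_one {m : ℕ} [NeZero m] {ν : ZMod m} (h : ν ≠ 0) :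
    (ν - 1).val + 1 = ν.val := by
  have h1 : (1 : ZMod m).val = 1 := val_one'' fun hm => by
    subst hm
    exact h (Subsingleton.elim _ _)
  have hν : 1 ≤ ν.val := Nat.one_le_iff_ne_zero.2 ((val_ne_zero ν).2 h)
  rw [val_sub (h1 ▸ hν), h1]
  omega

lemma cast_val_sub_one {R : Type*} [CommRing R] {m : ℕ} [NeZero m] (ν : ZMod m) :
    ((ν - 1).val : R) = ν.val - 1 + m * if ν = 0 then 1 else 0 := by
  split_ifs with h
  · have h1 : ((-1 : ZMod m).val : R) = m - 1 := by
      have h2 := congrArg (Nat.cast : ℕ → R) (val_neg_one_add_one (m := m))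
      push_cast at h2
      linear_combination h2
    rw [h, zero_sub, h1, val_zero]
    push_cast
    ring
  · rw [← val_sub_one_add_one h]
    push_cast
    ring

lemma cast_val_add_one {R : Type*} [CommRing R] {m : ℕ} [NeZero m] (ν : ZMod m) :
    ((ν + 1).val : R) = ν.val + 1 - m * if ν + 1 = 0 then 1 else 0 := by
  have h := cast_val_sub_one (R := R) (ν + 1)
  rw [add_sub_cancel_right] at h
  rw [h]
  ring

end ZMod

namespace LLS

variable {V E : Type*}

section Sigma

variable (tail head : E → V)

lemma sigma_eq_ite_sub_ite (hloop : Loopless tail head) (e : E) (x : V) :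
    sigma tail head e x = (if tail e = x then 1 else 0) - (if head e = x then 1 else 0) := by
  have := hloop e
  unfold sigma
  split_ifs <;> simp_all

lemma sigma_mul_sigma_of_adjacent [DecidableEq V] (hloop : Loopless tail head) {e : E} {v : V}
    (hadj : tail e = v ∨ head e = v) (x : V) :
    sigma tail head e v * sigma tail head e x =
      if x = v then 1 else if x = otherEnd tail head e v then -1 else 0 := by
  have := hloop e
  unfold sigma otherEnd
  rcases hadj with rfl | rfl <;> grind

lemma otherEnd_ne (hloop : Loopless tail head) {e : E} {v : V}
    (hadj : tail e = v ∨ head e = v) : otherEnd tail head e v ≠ v := by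
  have := hloop e
  unfold otherEnd
  rcases hadj with rfl | rfl <;> simp [this, Ne.symm this]

lemma count_sub_count_cons [DecidableEq V] (hloop : Loopless tail head) (e : E) (x : V)
    (l : List V) :
    ((x :: l).count (tail e) : ℤ) - (x :: l).count (head e) =
      (l.count (tail e) : ℤ) - l.count (head e) + sigma tail head e x := by
  rw [sigma_eq_ite_sub_ite tail head hloop, List.count_cons, List.count_cons]
  grind

end Sigma

section Twist

variable [Fintype E] [DecidableEq V] (tail head : E → V) (n : E → ℕ)

@[simp]
lemma twist_mu (w : AdmMD V E n) (x : V) (e : E) :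
    (twist tail head n w x).mu e = w.mu e + (sigma tail head e x : ZMod (n e)) := rfl

lemma DFun_nil (w : AdmMD V E n) (v : V) (e : E) : DFun tail head n w [] v e = 0 := by
  simp [DFun]

lemma DFun_cons (w : AdmMD V E n) (x : V) (l : List V) (v : V) (e : E) :
    DFun tail head n w (x :: l) v e =
      ((if x = otherEnd tail head e v ∧ (twist tail head n w x).mu e = 0 then 1 else 0)
        - (if x = v ∧ w.mu e = 0 then 1 else 0))
      + DFun tail head n (twist tail head n w x) l v e := by
  unfold DFun
  simp only [Finset.card_filter, List.length_cons, Fin.sum_univ_succ, Nat.cast_add,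
    Nat.cast_sum, Nat.cast_ite, Nat.cast_one, Nat.cast_zero]
  simp only [List.get_eq_getElem, Fin.val_zero, Fin.val_succ, List.getElem_cons_zero,
    List.getElem_cons_succ, List.take_succ_cons, List.take_zero, List.foldl_cons,
    List.foldl_nil, zero_add]
  exact add_sub_add_comm _ _ _ _

/-- `μ` read from the side of `v`, shifted by one so that its jumps by `n e` under twists happen
exactly at the steps counted by `D_{w,v}`. -/
noncomputable def orientedVal (e : E) (v : V) (μ : ZMod (n e)) : ℤ :=
  ((sigma tail head e v : ZMod (n e)) * μ - 1).val

lemma natCast_mul_DFun_step (hloop : Loopless tail head) {e : E} {v : V}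
    (hadj : tail e = v ∨ head e = v) [NeZero (n e)] (w : AdmMD V E n) (x : V) :
    (n e : ℤ) * ((if x = otherEnd tail head e v ∧ (twist tail head n w x).mu e = 0 then 1 else 0)
        - (if x = v ∧ w.mu e = 0 then 1 else 0)) =
      orientedVal tail head n e v ((twist tail head n w x).mu e)
        - orientedVal tail head n e v (w.mu e) - sigma tail head e v * sigma tail head e x := by
  unfold orientedVal
  set s : ZMod (n e) := ((sigma tail head e v : ℤ) : ZMod (n e))
  have hss : s * s = 1 := by
    have h := sigma_mul_sigma_of_adjacent tail head hloop hadj v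
    rw [if_pos rfl] at h
    simp only [s, ← Int.cast_mul, h, Int.cast_one]
  have hs0 : ∀ μ : ZMod (n e), s * μ = 0 ↔ μ = 0 := fun μ =>
    ⟨fun h => by simpa [← mul_assoc, hss] using congrArg (s * ·) h, fun h => by simp [h]⟩
  have hsx := sigma_mul_sigma_of_adjacent tail head hloop hadj x
  have hmu : s * (twist tail head n w x).mu e =
      s * w.mu e + ((if x = v then 1 else if x = otherEnd tail head e v then -1 else 0 : ℤ) :
        ZMod (n e)) := by
    rw [twist_mu, mul_add, ← hsx, Int.cast_mul]
  simp only [← hs0 ((twist tail head n w x).mu e), ← hs0 (w.mu e), hmu, hsx]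
  by_cases hxv : x = v
  · have hxu : x ≠ otherEnd tail head e v := hxv ▸ (otherEnd_ne tail head hloop hadj).symm
    simp only [eq_true hxv, eq_false hxu, if_true, Int.cast_one, add_sub_cancel_right, false_and,
      true_and, if_false, ZMod.cast_val_sub_one]
    ring
  · by_cases hxu : x = otherEnd tail head e v
    · simp only [eq_false hxv, eq_true hxu, if_true, if_false, Int.cast_neg, Int.cast_one,
        true_and, false_and, ← sub_eq_add_neg, ZMod.cast_val_sub_one (s * w.mu e - 1)]
      ring
    · simp [hxv, hxu]

lemma natCast_mul_DFun (hloop : Loopless tail head) {e : E} {v : V}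
    (hadj : tail e = v ∨ head e = v) [NeZero (n e)] (l : List V) (w : AdmMD V E n) :
    (n e : ℤ) * DFun tail head n w l v e =
      orientedVal tail head n e v ((l.foldl (twist tail head n) w).mu e)
        - orientedVal tail head n e v (w.mu e)
        - sigma tail head e v * ((l.count (tail e) : ℤ) - l.count (head e)) := by
  induction l generalizing w with
  | nil => simp [DFun_nil]
  | cons x l ih =>
    rw [DFun_cons, mul_add, natCast_mul_DFun_step tail head n hloop hadj, ih, List.foldl_cons,
      count_sub_count_cons tail head hloop]
    ring

end Twist

section Pairing

variable (tail head : E → V) (n : E → ℕ) (a : V → ℚ)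

noncomputable def pairingEdge (e : E) (μ : ZMod (n e)) : ℚ :=
  (if μ = 0 then 0 else a (tail e)) + μ.val * (a (head e) - a (tail e)) / n e

lemma pairingEdge_add_sigma (e : E) [NeZero (n e)] (x : V) (μ : ZMod (n e)) :
    pairingEdge tail head n a e (μ + (sigma tail head e x : ZMod (n e)))
        - pairingEdge tail head n a e μ
        + (if sigma tail head e x ≠ 0 ∧ μ + (sigma tail head e x : ZMod (n e)) = 0
            then a (otherEnd tail head e x) else 0)
        - (if sigma tail head e x ≠ 0 ∧ μ = 0 then a x else 0) =
      -(sigma tail head e x * (a (tail e) - a (head e)) / n e) := by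
  have hn : (n e : ℚ) ≠ 0 := Nat.cast_ne_zero.2 (NeZero.ne _)
  unfold pairingEdge sigma otherEnd
  by_cases ht : tail e = x
  · subst ht
    simp only [if_true, Int.cast_one, ne_eq, one_ne_zero, not_false_eq_true, true_and,
      ZMod.cast_val_add_one]
    split_ifs <;> field_simp <;> ring
  · by_cases hh : head e = x
    · subst hh
      simp only [ht, if_false, if_true, Int.cast_neg, Int.cast_one, ne_eq, neg_eq_zero,
        one_ne_zero, not_false_eq_true, true_and, ← sub_eq_add_neg, ZMod.cast_val_sub_one]
      split_ifs <;> field_simp <;> ring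
    · simp [ht, hh]

variable [Fintype V] [Fintype E] [DecidableEq V]

/-- The pairing of the multidegree induced on `Γ̃` (see `inducedMD`) with the extension of `a`
that is affine along each subdivided edge. -/
noncomputable def pairing (w : AdmMD V E n) : ℚ :=
  ∑ x, a x * w.wV x + ∑ e, pairingEdge tail head n a e (w.mu e)

lemma sum_mul_twist_wV (w : AdmMD V E n) (x₀ : V) :
    ∑ x, a x * (twist tail head n w x₀).wV x =
      ∑ x, a x * w.wV x
        + ∑ e, ((if sigma tail head e x₀ ≠ 0 ∧ w.mu e + (sigma tail head e x₀ : ZMod (n e)) = 0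
              then a (otherEnd tail head e x₀) else 0)
            - (if sigma tail head e x₀ ≠ 0 ∧ w.mu e = 0 then a x₀ else 0)) := by
  simp only [twist, Finset.card_filter]
  push_cast
  simp only [mul_add, mul_sub, Finset.sum_add_distrib, Finset.sum_sub_distrib, mul_ite, mul_zero,
    Finset.sum_ite_eq', Finset.mem_univ, if_true, Finset.mul_sum]
  rw [Finset.sum_comm]
  simp only [mul_one, ← and_assoc, ite_and, Finset.sum_ite_irrel, Finset.sum_ite_eq,
    Finset.mem_univ, if_true, Finset.sum_const_zero]
  ring

lemma pairing_twist [∀ e, NeZero (n e)] (w : AdmMD V E n) (x : V) :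
    pairing tail head n a (twist tail head n w x) =
      pairing tail head n a w
        - ∑ e, sigma tail head e x * (a (tail e) - a (head e)) / n e := by
  have h := Finset.sum_congr rfl fun e (_ : e ∈ Finset.univ) =>
    pairingEdge_add_sigma tail head n a e x (w.mu e)
  simp only [Finset.sum_add_distrib, Finset.sum_sub_distrib, Finset.sum_neg_distrib] at h
  unfold pairing
  rw [sum_mul_twist_wV]
  simp only [twist_mu, Finset.sum_sub_distrib]
  linarith

lemma pairing_foldl_twist (hloop : Loopless tail head) [∀ e, NeZero (n e)] (l : List V)
    (w : AdmMD V E n) :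
    pairing tail head n a (l.foldl (twist tail head n) w) =
      pairing tail head n a w
        - ∑ e, (((l.count (tail e) : ℤ) - l.count (head e) : ℤ) : ℚ)
            * (a (tail e) - a (head e)) / n e := by
  induction l generalizing w with
  | nil => simp
  | cons x l ih =>
    simp only [List.foldl_cons, ih, pairing_twist tail head n a,
      count_sub_count_cons tail head hloop]
    push_cast
    rw [sub_sub, ← Finset.sum_add_distrib]
    congr 2
    ext e
    ring

end Pairing

lemma count_sub_count_eq_of_foldl_twist_eq [Fintype V] [Fintype E] [DecidableEq V]
    {tail head : E → V} {n : E → ℕ} (hloop : Loopless tail head) [∀ e, NeZero (n e)]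
    {w : AdmMD V E n} {l₁ l₂ : List V}
    (h : l₁.foldl (twist tail head n) w = l₂.foldl (twist tail head n) w) (e : E) :
    (l₁.count (tail e) : ℤ) - l₁.count (head e) = l₂.count (tail e) - l₂.count (head e) := by
  set a : V → ℚ := fun x => (l₁.count x : ℚ) - l₂.count x
  have henergy : ∑ e, (a (tail e) - a (head e)) ^ 2 / n e = 0 := by
    have h₁ := pairing_foldl_twist tail head n a hloop l₁ w
    have h₂ := pairing_foldl_twist tail head n a hloop l₂ w
    rw [h, h₂, sub_right_inj, eq_comm] at h₁
    rw [← sub_eq_zero, ← Finset.sum_sub_distrib] at h₁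
    rw [← h₁]
    refine Finset.sum_congr rfl fun e _ => ?_
    simp only [a]
    push_cast
    ring
  have hnonneg : ∀ e ∈ Finset.univ, 0 ≤ (a (tail e) - a (head e)) ^ 2 / n e :=
    fun e _ => by positivity
  have he := (Finset.sum_eq_zero_iff_of_nonneg hnonneg).1 henergy e (Finset.mem_univ e)
  rw [div_eq_zero_iff, pow_eq_zero_iff two_ne_zero, sub_eq_zero] at he
  rcases he with he | he
  · simp only [a] at he
    exact_mod_cast (by linarith : ((l₁.count (tail e) : ℚ) - l₁.count (head e))
      = l₂.count (tail e) - l₂.count (head e))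
  · exact absurd he (Nat.cast_ne_zero.2 (NeZero.ne _))

theorem statement_12_general {V E : Type*} [Fintype V] [Fintype E] [DecidableEq V]
    (tail head : E → V) (n : E → ℕ)
    (hloop : Loopless tail head)
    (hn : ∀ e, 0 < n e)
    (wv : V → AdmMD V E n)
    (w : AdmMD V E n)
    (v : V) (l₁ l₂ : List V)
    (h₁ : l₁.foldl (twist tail head n) w = wv v)
    (h₂ : l₂.foldl (twist tail head n) w = wv v)
    (et : E) (hadj : tail et = v ∨ head et = v) :
    DFun tail head n w l₁ v et = DFun tail head n w l₂ v et := by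
  have : ∀ e, NeZero (n e) := fun e => ⟨(hn e).ne'⟩
  have hcount := count_sub_count_eq_of_foldl_twist_eq hloop (h₁.trans h₂.symm) et
  refine mul_left_cancel₀ (Nat.cast_ne_zero.2 (hn et).ne' : (n et : ℤ) ≠ 0) ?_
  rw [natCast_mul_DFun tail head n hloop hadj, natCast_mul_DFun tail head n hloop hadj, h₁, h₂,
    hcount]

/-- the function `D_{w,v}` is independent of the choice of path from `w`
to `w_v`. -/
theorem statement_12 {V E : Type*} [Fintype V] [Fintype E] [DecidableEq V] [DecidableEq E]
    (tail head : E → V) (n : E → ℕ)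
    (hloop : Loopless tail head) (hconn : MGConnected tail head)
    (hn : ∀ e, 0 < n e)
    (w₀ : AdmMD V E n) (wv : V → AdmMD V E n)
    (hwv : ∀ v : V, TwistSeq tail head n w₀ (wv v) ∧ Concentrated tail head n (wv v) v)
    (w : AdmMD V E n) (hw : TwistSeq tail head n w₀ w)
    (v : V) (l₁ l₂ : List V)
    (h₁ : l₁.foldl (twist tail head n) w = wv v)
    (h₂ : l₂.foldl (twist tail head n) w = wv v)
    (et : E) (hadj : tail et = v ∨ head et = v) :
    DFun tail head n w l₁ v et = DFun tail head n w l₂ v et :=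
  statement_12_general tail head n hloop hn wv w v l₁ l₂ h₁ h₂ et hadj

end LLS
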